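/- arXiv:2502.17203 — 4 statements merged into one kernel-verified Lean document; each statement's English description precedes it below -/
import Mathlib

section
/- Let H be a real inner product space, u ∈ H, and let V ⊆ V' be complete subspaces of H. Let u₁ be the orthogonal projection of u onto V, u₂ the orthogonal projection of u onto V', and set v = u₂ − u₁. Suppose 0 < τ < 1 and there exists ψ ∈ V' with ‖(u − u₁) − ψ‖ ≤ τ·‖u − u₁‖. Then (1/(1+τ))·‖v‖ ≤ ‖u − u₁‖ ≤ (1/(1−τ))·‖v‖. (Paper's a posteriori error estimate proposition: the stage improvement ‖v‖ is a reliable error indicator.) -/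
namespace Submodule

variable {𝕜 E : Type*} [RCLike 𝕜] [NormedAddCommGroup E] [InnerProductSpace 𝕜 E]

theorem norm_sub_starProjection_le {U : Submodule 𝕜 E} [U.HasOrthogonalProjection] (y : E)
    {x : E} (hx : x ∈ U) : ‖y - U.starProjection y‖ ≤ ‖y - x‖ := by
  rw [starProjection_minimal]
  exact ciInf_le ⟨0, by rintro _ ⟨_, rfl⟩; positivity⟩ (⟨x, hx⟩ : U)

/-- Any correction `ψ ∈ U'` of the coarse residual bounds the fine residual, since
`U.starProjection y + ψ` is a competitor in `U'`. -/
theorem norm_sub_starProjection_le_of_le {U U' : Submodule 𝕜 E} [U.HasOrthogonalProjection]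
    [U'.HasOrthogonalProjection] (hUU' : U ≤ U') (y : E) {ψ : E} (hψ : ψ ∈ U') :
    ‖y - U'.starProjection y‖ ≤ ‖(y - U.starProjection y) - ψ‖ := by
  rw [sub_sub]
  exact norm_sub_starProjection_le y (U'.add_mem (hUU' (U.starProjection_apply_mem y)) hψ)

end Submodule

theorem norm_bounds_of_norm_sub_le {E : Type*} [SeminormedAddCommGroup E] {e v : E} {τ : ℝ}
    (hτ0 : 0 ≤ τ) (hτ1 : τ < 1) (h : ‖e - v‖ ≤ τ * ‖e‖) :
    1 / (1 + τ) * ‖v‖ ≤ ‖e‖ ∧ ‖e‖ ≤ 1 / (1 - τ) * ‖v‖ := by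
  have hv_le : ‖v‖ ≤ ‖e‖ + ‖e - v‖ := norm_le_norm_add_norm_sub e v
  have he_le : ‖e‖ ≤ ‖v‖ + ‖e - v‖ := norm_le_norm_add_norm_sub' e v
  constructor
  · rw [one_div_mul_eq_div, div_le_iff₀ (by linarith)]
    linarith
  · rw [one_div_mul_eq_div, le_div_iff₀ (by linarith)]
    linarith

/-- A posteriori error estimate: the stage improvement ‖v‖ is a reliable
error indicator up to factors 1/(1+τ) and 1/(1−τ). -/
theorem a_posteriori_estimate {H : Type*} [NormedAddCommGroup H] [InnerProductSpace ℝ H]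
    (u : H) (V V' : Submodule ℝ H) [CompleteSpace V] [CompleteSpace V']
    (hVV' : V ≤ V') (u₁ u₂ v : H)
    (hu₁ : u₁ = (Submodule.orthogonalProjectionOnto V u : H))
    (hu₂ : u₂ = (Submodule.orthogonalProjectionOnto V' u : H))
    (hv : v = u₂ - u₁)
    (τ : ℝ) (hτ0 : 0 < τ) (hτ1 : τ < 1)
    (hψ : ∃ ψ ∈ V', ‖(u - u₁) - ψ‖ ≤ τ * ‖u - u₁‖) :
    (1 / (1 + τ)) * ‖v‖ ≤ ‖u - u₁‖ ∧ ‖u - u₁‖ ≤ (1 / (1 - τ)) * ‖v‖ := by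
  obtain ⟨ψ, hψV', hψ_le⟩ := hψ
  rw [← Submodule.starProjection_apply] at hu₁ hu₂
  have hres : ‖(u - u₁) - v‖ ≤ τ * ‖u - u₁‖ :=
    calc ‖(u - u₁) - v‖ = ‖u - V'.starProjection u‖ := by rw [hv, hu₂]; abel_nf
      _ ≤ ‖(u - u₁) - ψ‖ := hu₁ ▸ Submodule.norm_sub_starProjection_le_of_le hVV' u hψV'
      _ ≤ τ * ‖u - u₁‖ := hψ_le
  exact norm_bounds_of_norm_sub_le hτ0.le hτ1 hres
end

section
/- Let H be a real inner product space, u ∈ H, and let V ⊆ V' be complete subspaces of H. Let u₁ be the orthogonal projection of u onto V, u₂ the orthogonal projection of u onto V', and set v = u₂ − u₁. If τ > 0 and there exists ψ ∈ V' with ‖(u − u₁) − ψ‖ ≤ τ·‖u − u₁‖, then | ‖u − u₁‖ − ‖v‖ | ≤ τ·‖u − u₁‖. (Intermediate estimate in the proof of the paper's a posteriori error proposition.) -/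
/-! The correction `v = u₂ - u₁` differs from the old error `u - u₁` by exactly the new error
`u - u₂`, so the reverse triangle inequality bounds `|‖u - u₁‖ - ‖v‖|` by `‖u - u₂‖`. Since
`u₁ + ψ ∈ V'`, the best-approximation property of `u₂` bounds that in turn by
`‖(u - u₁) - ψ‖ ≤ τ ‖u - u₁‖`. -/

namespace Submodule

variable {𝕜 E : Type*} [RCLike 𝕜] [NormedAddCommGroup E] [InnerProductSpace 𝕜 E]

theorem norm_sub_starProjection_le_norm_sub {K : Submodule 𝕜 E} [K.HasOrthogonalProjection]
    (u : E) {w : E} (hw : w ∈ K) : ‖u - K.starProjection u‖ ≤ ‖u - w‖ := by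
  rw [starProjection_minimal]
  exact ciInf_le ⟨0, by rintro _ ⟨x, rfl⟩; positivity⟩ (⟨w, hw⟩ : K)

end Submodule

theorem a_posteriori_intermediate_general {H : Type*} [NormedAddCommGroup H]
    [InnerProductSpace ℝ H]
    (u : H) (V V' : Submodule ℝ H) [CompleteSpace V] [CompleteSpace V']
    (hVV' : V ≤ V') (u₁ u₂ v : H)
    (hu₁ : u₁ = (V.orthogonalProjectionOnto u : H))
    (hu₂ : u₂ = (V'.orthogonalProjectionOnto u : H))
    (hv : v = u₂ - u₁)
    (τ : ℝ)
    (hψ : ∃ ψ ∈ V', ‖(u - u₁) - ψ‖ ≤ τ * ‖u - u₁‖) :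
    |‖u - u₁‖ - ‖v‖| ≤ τ * ‖u - u₁‖ := by
  obtain ⟨ψ, hψV', hψle⟩ := hψ
  have hu₁V' : u₁ ∈ V' := hVV' (hu₁ ▸ Submodule.coe_mem _)
  calc |‖u - u₁‖ - ‖v‖| ≤ ‖(u - u₁) - v‖ := abs_norm_sub_norm_le _ _
    _ = ‖u - V'.starProjection u‖ := by rw [hv, hu₂, sub_sub_sub_cancel_right]; rfl
    _ ≤ ‖u - (u₁ + ψ)‖ :=
      Submodule.norm_sub_starProjection_le_norm_sub u (V'.add_mem hu₁V' hψV')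
    _ = ‖(u - u₁) - ψ‖ := by rw [sub_add_eq_sub_sub]
    _ ≤ τ * ‖u - u₁‖ := hψle

/-- Intermediate estimate in the a posteriori proof:
| ‖u − u₁‖ − ‖v‖ | ≤ τ·‖u − u₁‖. -/
theorem a_posteriori_intermediate {H : Type*} [NormedAddCommGroup H]
    [InnerProductSpace ℝ H]
    (u : H) (V V' : Submodule ℝ H) [CompleteSpace V] [CompleteSpace V']
    (hVV' : V ≤ V') (u₁ u₂ v : H)
    (hu₁ : u₁ = (V.orthogonalProjectionOnto u : H))
    (hu₂ : u₂ = (V'.orthogonalProjectionOnto u : H))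
    (hv : v = u₂ - u₁)
    (τ : ℝ) (hτ : 0 < τ)
    (hψ : ∃ ψ ∈ V', ‖(u - u₁) - ψ‖ ≤ τ * ‖u - u₁‖) :
    |‖u - u₁‖ - ‖v‖| ≤ τ * ‖u - u₁‖ :=
  a_posteriori_intermediate_general u V V' hVV' u₁ u₂ v hu₁ hu₂ hv τ hψ
end

section
/- Let H be a real inner product space, u ∈ H, and let V ⊆ V' be complete subspaces of H. Let u₁ be the orthogonal projection of u onto V and u₂ the orthogonal projection of u onto V'. Suppose 0 < τ, u ≠ u₁, and there exists a nonzero ψ ∈ V' with ‖(u − u₁) − ψ‖ ≤ τ·‖u − u₁‖. Then ‖u − u₂‖ ≤ 2τ·‖u − u₁‖. (Single-stage error reduction estimate (3.6) in the proof of the paper's geometric convergence proposition, obtained by comparing u₂ with the competitor u₁ + (‖u − u₁‖/‖ψ‖)·ψ ∈ V'.) -/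
/-!
The competitor `u₁ + (‖u - u₁‖ / ‖ψ‖) • ψ` lies in `V'`, so the best-approximation property of
`u₂` bounds `‖u - u₂‖` by its error, which is the error of approximating `e = u - u₁` by the
rescaled `ψ`. Rescaling `ψ` to the length of `e` costs at most `|‖ψ‖ - ‖e‖| ≤ ‖e - ψ‖`, so it at
most doubles the error `‖e - ψ‖ ≤ τ ‖e‖`.
-/

theorem Submodule.norm_sub_starProjection_le_s7 {𝕜 E : Type*} [RCLike 𝕜] [NormedAddCommGroup E]
    [InnerProductSpace 𝕜 E] {K : Submodule 𝕜 E} [K.HasOrthogonalProjection] (y : E) {x : E}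
    (hx : x ∈ K) : ‖y - K.starProjection y‖ ≤ ‖y - x‖ := by
  rw [starProjection_minimal]
  exact ciInf_le ⟨0, Set.forall_mem_range.2 fun _ ↦ norm_nonneg _⟩ (⟨x, hx⟩ : K)

theorem norm_sub_smul_div_norm_le {E : Type*} [NormedAddCommGroup E] [NormedSpace ℝ E]
    (e ψ : E) : ‖e - (‖e‖ / ‖ψ‖) • ψ‖ ≤ 2 * ‖e - ψ‖ := by
  rcases eq_or_ne ψ 0 with rfl | hψ
  · simp [two_mul]
  have hψ_pos : 0 < ‖ψ‖ := norm_pos_iff.2 hψ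
  have rescale_cost : ‖ψ - (‖e‖ / ‖ψ‖) • ψ‖ ≤ ‖e - ψ‖ := by
    have hcoeff : (1 - ‖e‖ / ‖ψ‖) * ‖ψ‖ = ‖ψ‖ - ‖e‖ := by field_simp
    calc ‖ψ - (‖e‖ / ‖ψ‖) • ψ‖ = ‖(1 - ‖e‖ / ‖ψ‖) • ψ‖ := by rw [sub_smul, one_smul]
      _ = |‖ψ‖ - ‖e‖| := by rw [norm_smul, Real.norm_eq_abs, ← hcoeff, abs_mul, abs_norm]
      _ ≤ ‖e - ψ‖ := by rw [norm_sub_rev]; exact abs_norm_sub_norm_le _ _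
  calc ‖e - (‖e‖ / ‖ψ‖) • ψ‖ ≤ ‖e - ψ‖ + ‖ψ - (‖e‖ / ‖ψ‖) • ψ‖ :=
        norm_sub_le_norm_sub_add_norm_sub _ _ _
    _ ≤ 2 * ‖e - ψ‖ := by linarith

theorem single_stage_reduction_general {H : Type*} [NormedAddCommGroup H]
    [InnerProductSpace ℝ H]
    (u : H) (V V' : Submodule ℝ H) [CompleteSpace V] [CompleteSpace V']
    (hVV' : V ≤ V') (u₁ u₂ : H)
    (hu₁ : u₁ = (V.orthogonalProjection u : H))
    (hu₂ : u₂ = (V'.orthogonalProjection u : H))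
    (τ : ℝ)
    (hψ : ∃ ψ ∈ V', ψ ≠ 0 ∧ ‖(u - u₁) - ψ‖ ≤ τ * ‖u - u₁‖) :
    ‖u - u₂‖ ≤ 2 * τ * ‖u - u₁‖ := by
  obtain ⟨ψ, hψV', -, hψ_approx⟩ := hψ
  have hu₁V' : u₁ ∈ V' := hVV' (hu₁ ▸ (V.orthogonalProjectionOnto u).2)
  calc ‖u - u₂‖ ≤ ‖u - (u₁ + (‖u - u₁‖ / ‖ψ‖) • ψ)‖ :=
        hu₂ ▸ Submodule.norm_sub_starProjection_le_s7 u (V'.add_mem hu₁V' (V'.smul_mem _ hψV'))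
    _ = ‖(u - u₁) - (‖u - u₁‖ / ‖ψ‖) • ψ‖ := by rw [sub_add_eq_sub_sub]
    _ ≤ 2 * ‖(u - u₁) - ψ‖ := norm_sub_smul_div_norm_le _ _
    _ ≤ 2 * τ * ‖u - u₁‖ := by linarith

/-- Single-stage error reduction estimate (3.6): under a relative network
approximation assumption, the projected error drops by a factor 2τ. -/
theorem single_stage_reduction {H : Type*} [NormedAddCommGroup H]
    [InnerProductSpace ℝ H]
    (u : H) (V V' : Submodule ℝ H) [CompleteSpace V] [CompleteSpace V']
    (hVV' : V ≤ V') (u₁ u₂ : H)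
    (hu₁ : u₁ = (V.orthogonalProjection u : H))
    (hu₂ : u₂ = (V'.orthogonalProjection u : H))
    (τ : ℝ) (hτ : 0 < τ) (hu : u ≠ u₁)
    (hψ : ∃ ψ ∈ V', ψ ≠ 0 ∧ ‖(u - u₁) - ψ‖ ≤ τ * ‖u - u₁‖) :
    ‖u - u₂‖ ≤ 2 * τ * ‖u - u₁‖ :=
  single_stage_reduction_general u V V' hVV' u₁ u₂ hu₁ hu₂ τ hψ
end

section
/- Let H be a real inner product space, u ∈ H, S ≥ 1 a natural number, and let V₀ ⊆ V₁ ⊆ ⋯ ⊆ V_S be an increasing chain of complete subspaces of H. For each s, let u_s* be the orthogonal projection of u onto V_s, and let τ₁, …, τ_S be positive reals. Suppose that for every s with 1 ≤ s ≤ S, either u = u_{s−1}* or there exists a nonzero ψ_s ∈ V_s with ‖(u − u_{s−1}*) − ψ_s‖ ≤ τ_s·‖u − u_{s−1}*‖. Then ‖u − u_S*‖ ≤ ‖u − u₀*‖ · ∏_{s=1}^{S} min{1, 2τ_s}. (Paper's geometric convergence proposition: under per-stage relative approximation assumptions, the algorithm's error satisfies a multiplicative reduction bound, giving geometric convergence when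 τ_s = τ < 1/2 for all s.) -/
/-!
Each stage reduces the error by the factor `min 1 τ_s`: the projection onto `V_s` is at least
as good as the previous projection `u_{s-1}* ∈ V_s`, and at least as good as
`u_{s-1}* + ψ_s ∈ V_s`, whose error is `(u - u_{s-1}*) - ψ_s`. Since `τ_s ≤ 2 τ_s`, chaining
the stages gives the product bound.
-/

open Finset

section Projection

variable {𝕜 E : Type*} [RCLike 𝕜] [NormedAddCommGroup E] [InnerProductSpace 𝕜 E]

theorem Submodule.norm_sub_starProjection_le_s8 {U : Submodule 𝕜 E} [U.HasOrthogonalProjection]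
    (y : E) {x : E} (hx : x ∈ U) : ‖y - U.starProjection y‖ ≤ ‖y - x‖ := by
  rw [starProjection_minimal]
  exact ciInf_le ⟨0, Set.forall_mem_range.mpr fun _ => norm_nonneg _⟩ (⟨x, hx⟩ : U)

theorem Submodule.norm_sub_starProjection_le_min_mul {U U' : Submodule 𝕜 E}
    [U.HasOrthogonalProjection] [U'.HasOrthogonalProjection] (hUU' : U ≤ U') (y : E)
    {ψ : E} (hψ : ψ ∈ U') {τ : ℝ}
    (hτ : ‖(y - U.starProjection y) - ψ‖ ≤ τ * ‖y - U.starProjection y‖) :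
    ‖y - U'.starProjection y‖ ≤ min 1 τ * ‖y - U.starProjection y‖ := by
  have hmem : U.starProjection y ∈ U' := hUU' (U.starProjection_apply_mem y)
  rw [min_mul_of_nonneg _ _ (norm_nonneg _), one_mul]
  refine le_min (norm_sub_starProjection_le_s8 y hmem) ?_
  calc ‖y - U'.starProjection y‖ ≤ ‖y - (U.starProjection y + ψ)‖ :=
        norm_sub_starProjection_le_s8 y (U'.add_mem hmem hψ)
    _ ≤ τ * ‖y - U.starProjection y‖ := by rwa [← sub_sub]

end Projection

theorem le_mul_prod_Icc_of_le_mul {R : Type*} [CommSemiring R] [PartialOrder R]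
    [IsOrderedRing R] {e c : ℕ → R} {n : ℕ} (hc : ∀ s < n, 0 ≤ c (s + 1))
    (he : ∀ s < n, e (s + 1) ≤ c (s + 1) * e s) :
    e n ≤ e 0 * ∏ s ∈ Icc 1 n, c s := by
  induction n with
  | zero => simp
  | succ n ih =>
    calc e (n + 1) ≤ c (n + 1) * e n := he n n.lt_succ_self
      _ ≤ c (n + 1) * (e 0 * ∏ s ∈ Icc 1 n, c s) :=
        mul_le_mul_of_nonneg_left
          (ih (fun s hs => hc s (by omega)) (fun s hs => he s (by omega)))
          (hc n n.lt_succ_self)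
      _ = e 0 * ∏ s ∈ Icc 1 (n + 1), c s := by
        rw [prod_Icc_succ_top (by omega)]
        ring

theorem geometric_convergence_general {H : Type*} [NormedAddCommGroup H]
    [InnerProductSpace ℝ H]
    (u : H) (S : ℕ)
    (V : ℕ → Submodule ℝ H) [∀ s, CompleteSpace (V s)]
    (hchain : ∀ s, s < S → V s ≤ V (s + 1))
    (ustar : ℕ → H)
    (hustar : ∀ s, ustar s = ((V s).orthogonalProjection u : H))
    (τ : ℕ → ℝ) (hτ : ∀ s, 1 ≤ s → s ≤ S → 0 < τ s)
    (happrox : ∀ s, 1 ≤ s → s ≤ S →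
      u = ustar (s - 1) ∨
        ∃ ψ ∈ V s, ψ ≠ 0 ∧
          ‖(u - ustar (s - 1)) - ψ‖ ≤ τ s * ‖u - ustar (s - 1)‖) :
    ‖u - ustar S‖ ≤ ‖u - ustar 0‖ * ∏ s ∈ Finset.Icc 1 S, min 1 (2 * τ s) := by
  obtain rfl : ustar = fun s => (V s).starProjection u := funext hustar
  have hτ' : ∀ s < S, 0 < τ (s + 1) := fun s hs => hτ (s + 1) (by omega) hs
  refine le_mul_prod_Icc_of_le_mul (e := fun s => ‖u - (V s).starProjection u‖)
    (fun s hs => le_min zero_le_one (by linarith [hτ' s hs])) fun s hs => ?_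
  obtain ⟨ψ, hψ, hψτ⟩ : ∃ ψ ∈ V (s + 1),
      ‖(u - (V s).starProjection u) - ψ‖ ≤ τ (s + 1) * ‖u - (V s).starProjection u‖ := by
    have h := happrox (s + 1) (by omega) hs
    simp only [Nat.add_sub_cancel] at h
    rcases h with hu | ⟨ψ, hψ, -, hψτ⟩
    · exact ⟨0, zero_mem _, by rw [← hu]; simp⟩
    · exact ⟨ψ, hψ, hψτ⟩
  calc _ ≤ min 1 (τ (s + 1)) * ‖u - (V s).starProjection u‖ :=
        Submodule.norm_sub_starProjection_le_min_mul (hchain s hs) u hψ hψτ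
    _ ≤ min 1 (2 * τ (s + 1)) * ‖u - (V s).starProjection u‖ := by
        gcongr
        linarith [hτ' s hs]

/-- Geometric convergence proposition: under per-stage relative approximation
assumptions, the error satisfies the multiplicative reduction bound
‖u − u_S*‖ ≤ ‖u − u₀*‖ · ∏_{s=1}^{S} min{1, 2τ_s}. -/
theorem geometric_convergence {H : Type*} [NormedAddCommGroup H]
    [InnerProductSpace ℝ H]
    (u : H) (S : ℕ) (hS : 1 ≤ S)
    (V : ℕ → Submodule ℝ H) [∀ s, CompleteSpace (V s)]
    (hchain : ∀ s, s < S → V s ≤ V (s + 1))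
    (ustar : ℕ → H)
    (hustar : ∀ s, ustar s = ((V s).orthogonalProjection u : H))
    (τ : ℕ → ℝ) (hτ : ∀ s, 1 ≤ s → s ≤ S → 0 < τ s)
    (happrox : ∀ s, 1 ≤ s → s ≤ S →
      u = ustar (s - 1) ∨
        ∃ ψ ∈ V s, ψ ≠ 0 ∧
          ‖(u - ustar (s - 1)) - ψ‖ ≤ τ s * ‖u - ustar (s - 1)‖) :
    ‖u - ustar S‖ ≤ ‖u - ustar 0‖ * ∏ s ∈ Finset.Icc 1 S, min 1 (2 * τ s) :=
  geometric_convergence_general u S V hchain ustar hustar τ hτ happrox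
end
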